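/- arXiv:1911.09640 — 4 statements merged into one kernel-verified Lean document; each statement's English description precedes it below -/
import Mathlib

section
/- Let k ≥ 3 be an integer, let 0 < c < 1 and 0 < ε < 1 − c. There exists n_0 = n_0(c, ε, k) such that for every even n ≥ n_0, every (k−1)-regular graph G on n vertices, every natural number g with 3 ≤ g ≤ c·log_{k−1}(n), every run G_0 = G, G_1, G_2, … of the (G,g,k)-high-girth process, and every integer t with 0 ≤ t ≤ T := (n − n^{c+ε})/2, the following hold: (1) |W(G_t)| = n − 2t; (2) every vertex v ∈ W(G_t) lies in at least |W(G_t)| − 1 − 2k·n^c available pairs of G_t; (3) |𝒜(G_t)| ≥ (1/2)·|W(G_t)|·(|W(G_t)| − 1 − 2k·n^c); (4) 𝒜(G_t) ≠ ∅ whenever t < T, so the run does not freeze before step T (i.e., G_{t+1} ≠ G_t for all t < T). -/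
open scoped Classical

noncomputable section

namespace HG

variable {n : ℕ}

/-- The set of unsaturated vertices of `Γ`: vertices of minimum degree. -/
def unsat (Γ : SimpleGraph (Fin n)) : Finset (Fin n) :=
  Finset.univ.filter fun v => Γ.degree v = Γ.minDegree

/-- `u, v` form an available pair: both unsaturated, distinct, at distance at least `g - 1`. -/
def AvailRel (g : ℕ) (Γ : SimpleGraph (Fin n)) (u v : Fin n) : Prop :=
  u ≠ v ∧ u ∈ unsat Γ ∧ v ∈ unsat Γ ∧ ((g - 1 : ℕ) : ℕ∞) ≤ Γ.edist u v

/-- Ordered available pairs. -/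
def avail (g : ℕ) (Γ : SimpleGraph (Fin n)) : Finset (Fin n × Fin n) :=
  Finset.univ.filter fun p => AvailRel g Γ p.1 p.2

/-- Unordered available pairs, i.e. the set `𝒜(Γ)`. -/
def availSym (g : ℕ) (Γ : SimpleGraph (Fin n)) : Finset (Sym2 (Fin n)) :=
  (avail g Γ).image fun p => s(p.1, p.2)

/-- `Γ` plus the edge `uv`. -/
def addEdge (Γ : SimpleGraph (Fin n)) (u v : Fin n) : SimpleGraph (Fin n) :=
  Γ ⊔ SimpleGraph.fromEdgeSet {s(u, v)}

/-- One step of the `(G,g,k)`-high-girth process: if `Γ` is `k`-regular or no pair is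
available, stay put; otherwise add a uniformly random available pair as an edge.
(The uniform choice is made over ordered pairs, which induces the uniform distribution
over unordered available pairs.) -/
def step (k g : ℕ) (Γ : SimpleGraph (Fin n)) : PMF (SimpleGraph (Fin n)) :=
  if h : Γ.IsRegularOfDegree k ∨ avail g Γ = ∅ then PMF.pure Γ
  else (PMF.uniformOfFinset (avail g Γ)
      (Finset.nonempty_iff_ne_empty.2 fun he => h (Or.inr he))).map
    fun p => addEdge Γ p.1 p.2

/-- The distribution of the trajectory `(G_0, G_1, …, G_T)` of the `(G,g,k)`-high-girth
process, recorded as a function `ℕ → SimpleGraph (Fin n)` whose values beyond time `T`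
are irrelevant (equal to `G`). -/
def traj (k g : ℕ) (G : SimpleGraph (Fin n)) : ℕ → PMF (ℕ → SimpleGraph (Fin n))
  | 0 => PMF.pure fun _ => G
  | T + 1 => (traj k g G T).bind fun f =>
      (step k g (f T)).map fun Γ => Function.update f (T + 1) Γ

/-- `f` is a run of the `(G,g,k)`-high-girth process. -/
def IsRun (k g : ℕ) (G : SimpleGraph (Fin n)) (f : ℕ → SimpleGraph (Fin n)) : Prop :=
  f 0 = G ∧ ∀ t : ℕ,
    if (f t).IsRegularOfDegree k ∨ avail g (f t) = ∅ then f (t + 1) = f t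
    else ∃ p ∈ avail g (f t), f (t + 1) = addEdge (f t) p.1 p.2

end HG

/-!
The process only ever joins two vertices of degree `k - 1`, so while it keeps moving, `G_t` has
exactly `n - 2t` vertices of degree `k - 1` and all others have degree `k`. An unsaturated vertex
`v` misses an available pair only with vertices at distance at most `g - 2` from it, and since the
maximum degree is `k`, the Moore bound leaves at most `(k - 1)^g ≤ n^c` of those. For `t < T` there
are more than `n^(c+ε) ≥ n^c` unsaturated vertices, so every one of them has a partner and the
process moves; counting partners over all `v` bounds `|𝒜(G_t)|`.
-/

open Finset

namespace SimpleGraph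

variable {V : Type*} {G : SimpleGraph V} {k : ℕ}

lemma exists_adj_edist_eq_of_edist_eq_succ {c u : V} {d : ℕ} (h : G.edist c u = d + 1) :
    ∃ w, G.Adj w u ∧ G.edist c w = d := by
  obtain ⟨p, hp⟩ := G.exists_walk_of_edist_eq_coe (k := d + 1) (by exact_mod_cast h)
  have hlen : p.reverse.length = d + 1 := by rw [Walk.length_reverse, hp]
  obtain ⟨w, hwu, q, hq⟩ : ∃ w, G.Adj w u ∧ ∃ q : G.Walk c w, q.length = d := by
    generalize p.reverse = r at hlen
    cases r with
    | nil => simp at hlen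
    | cons hadj q => exact ⟨_, hadj.symm, q.reverse, by simpa using hlen⟩
  refine ⟨w, hwu, le_antisymm (hq ▸ G.edist_le q) ?_⟩
  have : (d : ℕ∞) + 1 ≤ G.edist c w + 1 :=
    h ▸ G.edist_triangle.trans (add_le_add_right (G.edist_eq_one_iff_adj.2 hwu).le _)
  exact (ENat.add_le_add_iff_right ENat.one_ne_top).1 this

variable [Fintype V]

/- Double counting: each vertex at distance `d + 1` has a neighbour at distance `d`, and each
vertex at distance `d ≥ 1` spends one of its at most `k` edges on a neighbour at distance
`d - 1`. -/
lemma card_edist_eq_succ_le_mul (hdeg : ∀ v, G.degree v ≤ k) (c : V) {d : ℕ} (hd : d ≠ 0) :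
    #{v | G.edist c v = d + 1} ≤ (k - 1) * #{v | G.edist c v = d} := by
  have key := card_mul_le_card_mul (r := G.Adj) (m := 1) (n := k - 1)
    (s := {v | G.edist c v = d + 1}) (t := {v | G.edist c v = d}) ?_ ?_
  · simpa [mul_comm] using key
  · intro a ha
    obtain ⟨w, hwa, hw⟩ := exists_adj_edist_eq_of_edist_eq_succ (mem_filter.1 ha).2
    exact one_le_card.2 ⟨w, by simp [bipartiteAbove, hw, hwa.symm]⟩
  · intro b hb
    obtain ⟨d, rfl⟩ := Nat.exists_eq_succ_of_ne_zero hd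
    obtain ⟨w, hwb, hw⟩ := exists_adj_edist_eq_of_edist_eq_succ (d := d)
      (by simpa using (mem_filter.1 hb).2)
    have hsub : ({v | G.edist c v = ↑(d + 1) + 1} : Finset V).bipartiteBelow G.Adj b ⊆
        (G.neighborFinset b).erase w := by
      intro a ha
      simp only [bipartiteBelow, mem_filter, mem_univ, true_and] at ha
      refine mem_erase.2 ⟨?_, (G.mem_neighborFinset _ _).2 ha.2.symm⟩
      rintro rfl
      rw [hw] at ha
      norm_cast at ha
      omega
    calc _ ≤ #((G.neighborFinset b).erase w) := card_le_card hsub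
      _ = G.degree b - 1 := by
        rw [card_erase_of_mem ((G.mem_neighborFinset _ _).2 hwb.symm),
          card_neighborFinset_eq_degree]
      _ ≤ k - 1 := Nat.sub_le_sub_right (hdeg b) 1

lemma card_edist_eq_succ_le (hdeg : ∀ v, G.degree v ≤ k) (c : V) (d : ℕ) :
    #{v | G.edist c v = d + 1} ≤ k * (k - 1) ^ d := by
  induction d with
  | zero =>
    calc _ ≤ #(G.neighborFinset c) := card_le_card fun v hv => by
          simpa [edist_eq_one_iff_adj] using hv
      _ ≤ k * (k - 1) ^ 0 := by simpa using (card_neighborFinset_eq_degree G c).trans_le (hdeg c)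
  | succ d ih =>
    calc _ ≤ (k - 1) * #{v | G.edist c v = (d + 1 : ℕ)} := by
          simpa using card_edist_eq_succ_le_mul hdeg c d.succ_ne_zero
      _ ≤ (k - 1) * (k * (k - 1) ^ d) := by push_cast; gcongr
      _ = k * (k - 1) ^ (d + 1) := by ring

lemma card_edist_lt_succ_le (hdeg : ∀ v, G.degree v ≤ k) (c : V) (r : ℕ) :
    #{v | G.edist c v < r + 1} ≤ 1 + k * ∑ i ∈ range r, (k - 1) ^ i := by
  induction r with
  | zero =>
    calc _ ≤ #{c} := card_le_card fun v hv => by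
          simp only [mem_filter, Nat.cast_zero, zero_add, Order.lt_one_iff, edist_eq_zero_iff] at hv
          simp [hv.2]
      _ = 1 + k * ∑ i ∈ range 0, (k - 1) ^ i := by simp
  | succ r ih =>
    have hsub : ({v | G.edist c v < ↑(r + 1) + 1} : Finset V) ⊆
        ({v | G.edist c v < r + 1} : Finset V) ∪ ({v | G.edist c v = r + 1} : Finset V) := by
      intro v hv
      have hle : G.edist c v ≤ ↑(r + 1) :=
        (ENat.lt_add_one_iff (ENat.natCast_ne_top _)).1 (mem_filter.1 hv).2
      rcases hle.lt_or_eq with h | h <;> simp_all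
    calc _ ≤ #(({v | G.edist c v < r + 1} : Finset V) ∪ ({v | G.edist c v = r + 1} : Finset V)) :=
          card_le_card hsub
      _ ≤ (1 + k * ∑ i ∈ range r, (k - 1) ^ i) + k * (k - 1) ^ r :=
          (card_union_le _ _).trans (add_le_add ih (card_edist_eq_succ_le hdeg c r))
      _ = 1 + k * ∑ i ∈ range (r + 1), (k - 1) ^ i := by rw [sum_range_succ]; ring

lemma card_edist_lt_succ_le_pow (hk : 3 ≤ k) (hdeg : ∀ v, G.degree v ≤ k) (c : V) (r : ℕ) :
    #{v | G.edist c v < r + 1} ≤ (k - 1) ^ (r + 2) := by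
  have hgeom : ∑ i ∈ range r, (k - 1) ^ i < (k - 1) ^ r :=
    Nat.geomSum_lt (by omega) fun i hi => mem_range.1 hi
  have hk' : k ≤ (k - 1) ^ 2 := by
    obtain ⟨j, rfl⟩ := Nat.exists_eq_add_of_le hk
    simp only [show 3 + j - 1 = j + 2 by omega]; nlinarith
  calc _ ≤ 1 + k * ∑ i ∈ range r, (k - 1) ^ i := card_edist_lt_succ_le hdeg c r
    _ ≤ k * (k - 1) ^ r := by nlinarith
    _ ≤ (k - 1) ^ 2 * (k - 1) ^ r := Nat.mul_le_mul_right _ hk'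
    _ = (k - 1) ^ (r + 2) := by ring

end SimpleGraph

lemma Real.pow_le_rpow_of_le_mul_log_div {b x c : ℝ} {g : ℕ} (hb : 1 < b) (hx : 0 < x)
    (h : (g : ℝ) ≤ c * Real.log x / Real.log b) : b ^ g ≤ x ^ c := by
  rw [le_div_iff₀ (Real.log_pos hb)] at h
  rw [← Real.log_le_log_iff (by positivity) (by positivity), Real.log_pow, Real.log_rpow hx]
  linarith

namespace HG

variable {n k g m : ℕ} {Γ G : SimpleGraph (Fin n)} {f : ℕ → SimpleGraph (Fin n)} {u v : Fin n}

lemma not_adj_of_availRel (hg : 3 ≤ g) (h : AvailRel g Γ u v) : ¬Γ.Adj u v := by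
  intro hadj
  have hdist := h.2.2.2
  rw [SimpleGraph.edist_eq_one_iff_adj.2 hadj] at hdist
  norm_cast at hdist
  omega

lemma addEdge_ne_self (hg : 3 ≤ g) (h : AvailRel g Γ u v) : addEdge Γ u v ≠ Γ :=
  (SimpleGraph.lt_sup_edge Γ u v h.1 (not_adj_of_availRel hg h)).ne'

lemma degree_addEdge (huv : u ≠ v) (hadj : ¬Γ.Adj u v) (w : Fin n) :
    (addEdge Γ u v).degree w = Γ.degree w + if w = u ∨ w = v then 1 else 0 := by
  have hdisj : Disjoint Γ (SimpleGraph.edge u v) := (SimpleGraph.disjoint_edge Γ).2 hadj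
  rw [← SimpleGraph.card_neighborFinset_eq_degree, ← SimpleGraph.card_neighborFinset_eq_degree,
    show addEdge Γ u v = Γ ⊔ SimpleGraph.edge u v from rfl, SimpleGraph.neighborFinset_sup,
    card_union_of_disjoint (SimpleGraph.disjoint_neighborFinset_of_disjoint _ _ _ hdisj)]
  congr 1
  split_ifs with hw
  · rw [card_eq_one]
    rcases hw with rfl | rfl
    · exact ⟨v, by ext x; simp [SimpleGraph.edge_adj, eq_comm]; grind⟩
    · exact ⟨u, by ext x; simp [SimpleGraph.edge_adj, eq_comm]; grind⟩
  · rw [card_eq_zero, eq_empty_iff_forall_notMem]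
    simp [SimpleGraph.edge_adj, (not_or.1 hw).1, (not_or.1 hw).2]

structure AlmostRegular (k m : ℕ) (Γ : SimpleGraph (Fin n)) : Prop where
  degree_eq : ∀ v, Γ.degree v = k - 1 ∨ Γ.degree v = k
  card_filter_degree_eq : #{v | Γ.degree v = k - 1} = m

namespace AlmostRegular

lemma of_isRegularOfDegree (hΓ : Γ.IsRegularOfDegree (k - 1)) : AlmostRegular k n Γ :=
  ⟨fun v => .inl (hΓ v), by simp [hΓ.degree_eq]⟩

lemma degree_le (h : AlmostRegular k m Γ) (v : Fin n) : Γ.degree v ≤ k := by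
  rcases h.degree_eq v with hv | hv <;> omega

lemma unsat_eq (h : AlmostRegular k m Γ) (hm : m ≠ 0) :
    unsat Γ = ({v | Γ.degree v = k - 1} : Finset (Fin n)) := by
  obtain ⟨v₀, hv₀⟩ := card_ne_zero.1 (h.card_filter_degree_eq ▸ hm)
  have : Nonempty (Fin n) := ⟨v₀⟩
  have hmin : Γ.minDegree = k - 1 :=
    le_antisymm ((mem_filter.1 hv₀).2 ▸ Γ.minDegree_le_degree v₀)
      (Γ.le_minDegree_of_forall_le_degree _ fun v => by rcases h.degree_eq v with hv | hv <;> omega)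
  simp only [unsat, hmin]

lemma card_unsat (h : AlmostRegular k m Γ) (hm : m ≠ 0) : #(unsat Γ) = m := by
  rw [h.unsat_eq hm, h.card_filter_degree_eq]

lemma degree_of_mem_unsat (h : AlmostRegular k m Γ) (hm : m ≠ 0) (hv : v ∈ unsat Γ) :
    Γ.degree v = k - 1 := by
  rw [h.unsat_eq hm] at hv
  exact (mem_filter.1 hv).2

lemma addEdge (hk : 1 ≤ k) (hg : 3 ≤ g) (h : AlmostRegular k m Γ) (hm : m ≠ 0)
    (huv : AvailRel g Γ u v) : AlmostRegular k (m - 2) (HG.addEdge Γ u v) := by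
  have hu := h.degree_of_mem_unsat hm huv.2.1
  have hv := h.degree_of_mem_unsat hm huv.2.2.1
  have hdeg := degree_addEdge huv.1 (not_adj_of_availRel hg huv)
  constructor
  · intro w
    rw [hdeg w]
    split_ifs with hw
    · rcases hw with rfl | rfl <;> omega
    · simpa using h.degree_eq w
  · have hfilter : ({w | (HG.addEdge Γ u v).degree w = k - 1} : Finset (Fin n)) =
        ({w | Γ.degree w = k - 1} : Finset (Fin n)) \ {u, v} := by
      ext w
      simp only [mem_filter, mem_univ, true_and, mem_sdiff, mem_insert, mem_singleton, hdeg w]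
      split_ifs with hw
      · rcases hw with rfl | rfl <;> simp only [true_or, or_true, not_true_eq_false, and_false,
          iff_false] <;> omega
      · simp [not_or.1 hw]
    rw [hfilter, card_sdiff_of_subset, h.card_filter_degree_eq, card_pair huv.1]
    intro w hw
    rcases mem_insert.1 hw with rfl | hw
    · simpa using hu
    · simpa [mem_singleton.1 hw] using hv

end AlmostRegular

lemma card_unsat_le_card_availRel_add (hk : 3 ≤ k) (hg : 2 ≤ g) (hdeg : ∀ w, Γ.degree w ≤ k)
    (hv : v ∈ unsat Γ) : #(unsat Γ) ≤ #{u | AvailRel g Γ v u} + (k - 1) ^ g := by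
  have hsub : unsat Γ ⊆
      ({u | AvailRel g Γ v u} : Finset (Fin n)) ∪
        ({u | Γ.edist v u < ((g - 2 : ℕ) : ℕ∞) + 1} : Finset (Fin n)) := by
    intro u hu
    have hg' : ((g - 1 : ℕ) : ℕ∞) = ↑(g - 2) + 1 := by norm_cast; omega
    by_cases hvu : v = u
    · subst hvu
      exact mem_union_right _ (mem_filter.2 ⟨mem_univ _, by simp⟩)
    by_cases hd : ((g - 1 : ℕ) : ℕ∞) ≤ Γ.edist v u
    · exact mem_union_left _ (mem_filter.2 ⟨mem_univ _, hvu, hv, hu, hd⟩)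
    · exact mem_union_right _ (mem_filter.2 ⟨mem_univ _, hg' ▸ not_le.1 hd⟩)
  calc #(unsat Γ) ≤ _ := card_le_card hsub
    _ ≤ _ := card_union_le _ _
    _ ≤ #{u | AvailRel g Γ v u} + (k - 1) ^ (g - 2 + 2) :=
      Nat.add_le_add_left (SimpleGraph.card_edist_lt_succ_le_pow hk hdeg v (g - 2)) _
    _ = _ := by rw [Nat.sub_add_cancel hg]

lemma card_avail_eq_sum (g : ℕ) (Γ : SimpleGraph (Fin n)) :
    #(avail g Γ) = ∑ v, #{u | AvailRel g Γ v u} := by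
  rw [avail, card_filter, Fintype.sum_prod_type]
  exact sum_congr rfl fun v _ => (card_filter _ _).symm

lemma card_avail_le_two_mul_card_availSym (g : ℕ) (Γ : SimpleGraph (Fin n)) :
    #(avail g Γ) ≤ 2 * #(availSym g Γ) := by
  refine card_le_mul_card_image _ 2 fun e he => ?_
  obtain ⟨⟨a, b⟩, -, rfl⟩ := mem_image.1 he
  calc _ ≤ #({(a, b), (b, a)} : Finset (Fin n × Fin n)) := card_le_card fun p hp => by
        rcases Sym2.eq_iff.1 (mem_filter.1 hp).2 with ⟨h1, h2⟩ | ⟨h1, h2⟩ <;>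
          simp [Prod.ext_iff, h1, h2]
    _ ≤ 2 := card_le_two

lemma card_unsat_mul_le_two_mul_card_availSym {a : ℝ}
    (h : ∀ v ∈ unsat Γ, a ≤ #{u | AvailRel g Γ v u}) :
    #(unsat Γ) * a ≤ 2 * #(availSym g Γ) := by
  calc #(unsat Γ) * a = ∑ _v ∈ unsat Γ, a := by rw [sum_const, nsmul_eq_mul]
    _ ≤ ∑ v ∈ unsat Γ, (#{u | AvailRel g Γ v u} : ℝ) := sum_le_sum h
    _ ≤ ∑ v, (#{u | AvailRel g Γ v u} : ℝ) :=
      sum_le_sum_of_subset_of_nonneg (subset_univ _) fun _ _ _ => Nat.cast_nonneg _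
    _ = #(avail g Γ) := by rw [card_avail_eq_sum]; push_cast; rfl
    _ ≤ 2 * #(availSym g Γ) := by exact_mod_cast card_avail_le_two_mul_card_availSym g Γ

lemma IsRun.exists_succ_eq_addEdge (hrun : IsRun k g G f) (hk : 3 ≤ k) (hg : 2 ≤ g) {t : ℕ}
    (ht : AlmostRegular k m (f t)) (hm : (k - 1) ^ g < m) :
    ∃ p ∈ avail g (f t), f (t + 1) = addEdge (f t) p.1 p.2 := by
  have hm0 : m ≠ 0 := by omega
  obtain ⟨v, hv⟩ := card_ne_zero.1 (ht.card_unsat hm0 ▸ hm0)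
  have hpartner := card_unsat_le_card_availRel_add hk hg ht.degree_le hv
  obtain ⟨u, hu⟩ := card_pos.1 (by rw [ht.card_unsat hm0] at hpartner; omega :
    0 < #({u | AvailRel g (f t) v u} : Finset (Fin n)))
  have hvu : (v, u) ∈ avail g (f t) := mem_filter.2 ⟨mem_univ _, (mem_filter.1 hu).2⟩
  have hreg : ¬(f t).IsRegularOfDegree k := fun hreg => by
    have := ht.degree_of_mem_unsat hm0 hv
    rw [hreg v] at this
    omega
  have hstep := hrun.2 t
  rwa [if_neg (not_or.2 ⟨hreg, ne_empty_of_mem hvu⟩)] at hstep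

lemma IsRun.almostRegular (hrun : IsRun k g G f) (hk : 3 ≤ k) (hg : 3 ≤ g)
    (hG : G.IsRegularOfDegree (k - 1)) {t : ℕ} (ht : (k - 1) ^ g + 2 * t ≤ n) :
    AlmostRegular k (n - 2 * t) (f t) := by
  induction t with
  | zero => simpa [hrun.1] using AlmostRegular.of_isRegularOfDegree hG
  | succ t ih =>
    have hreg := ih (by omega)
    obtain ⟨p, hp, hstep⟩ := hrun.exists_succ_eq_addEdge hk (by omega) hreg (by omega)
    rw [hstep, show n - 2 * (t + 1) = n - 2 * t - 2 by omega]
    exact hreg.addEdge (by omega) hg (by omega) (mem_filter.1 hp).2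

end HG

open HG

theorem early_phase_general (k : ℕ) (hk : 3 ≤ k) (c ε : ℝ) (hε0 : 0 < ε) :
    ∃ n₀ : ℕ, ∀ n : ℕ, n₀ ≤ n → Even n →
      ∀ G : SimpleGraph (Fin n), G.IsRegularOfDegree (k - 1) →
      ∀ g : ℕ, 3 ≤ g → (g : ℝ) ≤ c * Real.log n / Real.log (k - 1) →
      ∀ f : ℕ → SimpleGraph (Fin n), HG.IsRun k g G f →
      ∀ t : ℕ, (t : ℝ) ≤ ((n : ℝ) - (n : ℝ) ^ (c + ε)) / 2 →
        ((HG.unsat (f t)).card = n - 2 * t) ∧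
        (∀ v ∈ HG.unsat (f t),
          ((HG.unsat (f t)).card : ℝ) - 1 - 2 * k * (n : ℝ) ^ c ≤
            ((Finset.univ.filter fun u : Fin n => HG.AvailRel g (f t) v u).card : ℝ)) ∧
        (((HG.unsat (f t)).card : ℝ) *
            (((HG.unsat (f t)).card : ℝ) - 1 - 2 * k * (n : ℝ) ^ c) / 2 ≤
          ((HG.availSym g (f t)).card : ℝ)) ∧
        ((t : ℝ) < ((n : ℝ) - (n : ℝ) ^ (c + ε)) / 2 →
          HG.availSym g (f t) ≠ ∅ ∧ f (t + 1) ≠ f t) := by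
  refine ⟨1, fun n hn _ G hG g hg hglog f hrun t ht => ?_⟩
  have hn1 : (1 : ℝ) ≤ n := by exact_mod_cast hn
  have hk3 : (3 : ℝ) ≤ k := by exact_mod_cast hk
  have hball : (((k - 1) ^ g : ℕ) : ℝ) ≤ (n : ℝ) ^ c := by
    push_cast [Nat.cast_sub (by omega : 1 ≤ k)]
    exact Real.pow_le_rpow_of_le_mul_log_div (by linarith) (by linarith) hglog
  have hnc : (n : ℝ) ^ c ≤ (n : ℝ) ^ (c + ε) :=
    Real.rpow_le_rpow_of_exponent_le hn1 (by linarith)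
  have hbudget : (k - 1) ^ g + 2 * t ≤ n := by
    exact_mod_cast (show (((k - 1) ^ g + 2 * t : ℕ) : ℝ) ≤ n by push_cast at hball ⊢; linarith)
  have hm : n - 2 * t ≠ 0 := by have := pow_pos (by omega : 0 < k - 1) g; omega
  have hreg := hrun.almostRegular hk hg hG hbudget
  have hpartners (v) (hv : v ∈ unsat (f t)) :
      (#(unsat (f t)) : ℝ) - 1 - 2 * k * (n : ℝ) ^ c ≤ #{u | AvailRel g (f t) v u} := by
    have hle : (#(unsat (f t)) : ℝ) ≤ #{u | AvailRel g (f t) v u} + (((k - 1) ^ g : ℕ) : ℝ) := by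
      exact_mod_cast card_unsat_le_card_availRel_add hk (by omega) hreg.degree_le hv
    nlinarith [Real.rpow_nonneg (Nat.cast_nonneg n) c]
  refine ⟨hreg.card_unsat hm, hpartners, ?_, fun htT => ?_⟩
  · linarith [card_unsat_mul_le_two_mul_card_availSym hpartners]
  · have hlt : (k - 1) ^ g < n - 2 * t := by
      have : (((k - 1) ^ g + 2 * t : ℕ) : ℝ) < n := by push_cast at hball ⊢; linarith
      have : (k - 1) ^ g + 2 * t < n := by exact_mod_cast this
      omega
    obtain ⟨p, hp, hstep⟩ := hrun.exists_succ_eq_addEdge hk (by omega) hreg hlt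
    exact ⟨ne_empty_of_mem (mem_image_of_mem _ hp), hstep ▸ addEdge_ne_self hg (mem_filter.1 hp).2⟩

/-- Early-phase properties of the high-girth process: with
`T = (n - n^(c+ε))/2`, for every run and every integer `0 ≤ t ≤ T`:
(1) `|W(G_t)| = n - 2t`; (2) each `v ∈ W(G_t)` lies in at least `|W(G_t)| - 1 - 2k·n^c`
available pairs; (3) `|𝒜(G_t)| ≥ (1/2)·|W(G_t)|·(|W(G_t)| - 1 - 2k·n^c)`;
(4) if moreover `t < T` then `𝒜(G_t) ≠ ∅` and the run does not freeze at step `t`. -/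
theorem early_phase (k : ℕ) (hk : 3 ≤ k) (c ε : ℝ) (hc0 : 0 < c) (hc1 : c < 1)
    (hε0 : 0 < ε) (hε1 : ε < 1 - c) :
    ∃ n₀ : ℕ, ∀ n : ℕ, n₀ ≤ n → Even n →
      ∀ G : SimpleGraph (Fin n), G.IsRegularOfDegree (k - 1) →
      ∀ g : ℕ, 3 ≤ g → (g : ℝ) ≤ c * Real.log n / Real.log (k - 1) →
      ∀ f : ℕ → SimpleGraph (Fin n), HG.IsRun k g G f →
      ∀ t : ℕ, (t : ℝ) ≤ ((n : ℝ) - (n : ℝ) ^ (c + ε)) / 2 →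
        ((HG.unsat (f t)).card = n - 2 * t) ∧
        (∀ v ∈ HG.unsat (f t),
          ((HG.unsat (f t)).card : ℝ) - 1 - 2 * k * (n : ℝ) ^ c ≤
            ((Finset.univ.filter fun u : Fin n => HG.AvailRel g (f t) v u).card : ℝ)) ∧
        (((HG.unsat (f t)).card : ℝ) *
            (((HG.unsat (f t)).card : ℝ) - 1 - 2 * k * (n : ℝ) ^ c) / 2 ≤
          ((HG.availSym g (f t)).card : ℝ)) ∧
        ((t : ℝ) < ((n : ℝ) - (n : ℝ) ^ (c + ε)) / 2 →
          HG.availSym g (f t) ≠ ∅ ∧ f (t + 1) ≠ f t) :=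
  early_phase_general k hk c ε hε0
end
end

section
/- Let k ≥ 3 and g ≥ 3 be integers, let n be even, and let G be a graph on n vertices with maximum degree at most k. Suppose G_0 = G, G_1, G_2, … is a run of the (G,g,k)-high-girth process and that for some t the graph G_t is safe, i.e., every vertex of G_t has degree k−1 or k and every two vertices of degree k−1 are at graph distance at least g−1 in G_t. Then the run saturates: there exists s ≥ t such that G_s is k-regular. -/
open scoped Classical

noncomputable section

/-- A graph (all of whose degrees are `k-1` or `k`) is safe if every two of its
vertices of degree `k-1` are at graph distance at least `g-1`. -/
def HG.Safe (k g : ℕ) {n : ℕ} (Γ : SimpleGraph (Fin n)) : Prop :=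
  (∀ v : Fin n, Γ.degree v = k - 1 ∨ Γ.degree v = k) ∧
  ∀ u v : Fin n, u ≠ v → Γ.degree u = k - 1 → Γ.degree v = k - 1 →
    ((g - 1 : ℕ) : ℕ∞) ≤ Γ.edist u v

/-!
In a safe graph that is not `k`-regular, the available pairs are exactly the pairs of distinct
vertices of degree `k - 1`, and by the handshake lemma (`n` even) there are at least two such
vertices. As `g ≥ 3`, an available pair is non-adjacent, so adding it raises both degrees to `k`.
A walk in the new graph between two remaining vertices of degree `k - 1` either avoids the new
edge or first reaches one of its endpoints inside the old graph, so safety is preserved. Each step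
therefore removes two vertices of degree `k - 1`, until the graph is `k`-regular.
-/

open Finset SimpleGraph

namespace SimpleGraph

variable {V : Type*} [Fintype V] (Γ : SimpleGraph V) [DecidableRel Γ.Adj]

theorem even_card_degree_eq_pred {k : ℕ} (hV : Even (Fintype.card V)) (hk : 0 < k)
    (hdeg : ∀ v, Γ.degree v = k - 1 ∨ Γ.degree v = k) :
    Even #{v | Γ.degree v = k - 1} := by
  have hsum : ∑ v, Γ.degree v + #{v | Γ.degree v = k - 1} = Fintype.card V * k := by
    rw [card_filter, ← sum_add_distrib, ← smul_eq_mul, ← card_univ, ← sum_const]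
    refine sum_congr rfl fun v _ => ?_
    rcases hdeg v with h | h <;> simp only [h] <;> split_ifs <;> omega
  have heven : Even (∑ v, Γ.degree v + #{v | Γ.degree v = k - 1}) :=
    hsum ▸ hV.mul_right k
  rw [Nat.even_add, sum_degrees_eq_twice_card_edges] at heven
  exact heven.mp (even_two_mul _)

end SimpleGraph

namespace HG

variable {n k g : ℕ} {Γ : SimpleGraph (Fin n)} {u v : Fin n}

theorem addEdge_eq_sup_edge (Γ : SimpleGraph (Fin n)) (u v : Fin n) :
    addEdge Γ u v = Γ ⊔ edge u v := rfl

theorem addEdge_comm (Γ : SimpleGraph (Fin n)) (u v : Fin n) :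
    addEdge Γ u v = addEdge Γ v u := by
  rw [addEdge_eq_sup_edge, addEdge_eq_sup_edge, edge_comm]

theorem degree_addEdge_left (huv : u ≠ v) (hadj : ¬Γ.Adj u v) :
    (addEdge Γ u v).degree u = Γ.degree u + 1 := by
  have hnbr : (addEdge Γ u v).neighborFinset u = insert v (Γ.neighborFinset u) := by
    ext w
    rw [mem_neighborFinset, mem_insert, mem_neighborFinset, addEdge_eq_sup_edge, sup_adj, edge_adj]
    grind
  rw [← card_neighborFinset_eq_degree, ← card_neighborFinset_eq_degree, hnbr,
    card_insert_of_notMem (by simpa using hadj)]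

theorem degree_addEdge_right (huv : u ≠ v) (hadj : ¬Γ.Adj u v) :
    (addEdge Γ u v).degree v = Γ.degree v + 1 := by
  rw [addEdge_comm]
  exact degree_addEdge_left huv.symm fun h => hadj h.symm

theorem degree_addEdge_of_ne {w : Fin n} (hwu : w ≠ u) (hwv : w ≠ v) :
    (addEdge Γ u v).degree w = Γ.degree w := by
  have hnbr : (addEdge Γ u v).neighborFinset w = Γ.neighborFinset w := by
    ext x
    rw [mem_neighborFinset, mem_neighborFinset, addEdge_eq_sup_edge, sup_adj, edge_adj]
    grind
  rw [← card_neighborFinset_eq_degree, ← card_neighborFinset_eq_degree, hnbr]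

/-- A walk in `Γ + uv` either stays in `Γ` or reaches `u` or `v` inside `Γ` first. -/
theorem inf_edist_le_edist_addEdge (Γ : SimpleGraph (Fin n)) (u v x y : Fin n) :
    Γ.edist x y ⊓ (Γ.edist x u ⊓ Γ.edist x v) ≤ (addEdge Γ u v).edist x y := by
  refine le_iInf fun p => ?_
  induction p with
  | nil => simp
  | @cons a w c hadj q ih =>
    rw [addEdge_eq_sup_edge, sup_adj, edge_adj] at hadj
    rcases hadj with hadj | ⟨⟨rfl, rfl⟩ | ⟨rfl, rfl⟩, -⟩
    · have hstep (z : Fin n) : Γ.edist a z ≤ Γ.edist w z + 1 := by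
        rw [add_comm, ← edist_eq_one_iff_adj.mpr hadj]
        exact SimpleGraph.edist_triangle
      calc Γ.edist a c ⊓ (Γ.edist a u ⊓ Γ.edist a v)
          ≤ (Γ.edist w c + 1) ⊓ ((Γ.edist w u + 1) ⊓ (Γ.edist w v + 1)) := by
            gcongr <;> exact hstep _
        _ = Γ.edist w c ⊓ (Γ.edist w u ⊓ Γ.edist w v) + 1 := by
            simp only [min_add_add_right]
        _ ≤ (q.cons _).length := by
            rw [Walk.length_cons, Nat.cast_succ]
            gcongr
    · exact inf_le_of_right_le (inf_le_of_left_le (by simp))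
    · exact inf_le_of_right_le (inf_le_of_right_le (by simp))

def deficient (k : ℕ) (Γ : SimpleGraph (Fin n)) : Finset (Fin n) := {v | Γ.degree v = k - 1}

@[simp]
theorem mem_deficient : v ∈ deficient k Γ ↔ Γ.degree v = k - 1 := by
  simp [deficient]

theorem mem_avail {p : Fin n × Fin n} : p ∈ avail g Γ ↔ AvailRel g Γ p.1 p.2 := by
  simp [avail]

theorem deficient_addEdge (huv : u ≠ v) (hadj : ¬Γ.Adj u v) (hu : Γ.degree u = k - 1)
    (hv : Γ.degree v = k - 1) :
    deficient k (addEdge Γ u v) = ((deficient k Γ).erase u).erase v := by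
  ext x
  simp only [mem_deficient, mem_erase]
  by_cases hxv : x = v
  · subst hxv
    simp [degree_addEdge_right huv hadj, hv]
  by_cases hxu : x = u
  · subst hxu
    simp [degree_addEdge_left huv hadj, hu]
  simp [degree_addEdge_of_ne hxu hxv, hxu, hxv]

theorem AvailRel.not_adj (hg : 3 ≤ g) (hp : AvailRel g Γ u v) : ¬Γ.Adj u v := by
  intro hadj
  have hdist := hp.2.2.2
  rw [edist_eq_one_iff_adj.mpr hadj, Nat.cast_le_one] at hdist
  omega

namespace Safe

variable (hs : Safe k g Γ) (hreg : ¬Γ.IsRegularOfDegree k)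
include hs hreg

theorem pos_of_not_isRegularOfDegree : 0 < k := by
  by_contra! hk
  exact hreg fun v => by rcases hs.1 v with h | h <;> omega

theorem exists_degree_eq_pred : ∃ w, Γ.degree w = k - 1 := by
  by_contra! h
  exact hreg fun v => (hs.1 v).resolve_left (h v)

theorem minDegree_eq : Γ.minDegree = k - 1 := by
  obtain ⟨w, hw⟩ := hs.exists_degree_eq_pred hreg
  have : Nonempty (Fin n) := ⟨w⟩
  refine le_antisymm (hw ▸ Γ.minDegree_le_degree w) ?_
  exact Γ.le_minDegree_of_forall_le_degree _ fun v => by rcases hs.1 v with h | h <;> omega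

theorem availRel_iff :
    AvailRel g Γ u v ↔ u ≠ v ∧ Γ.degree u = k - 1 ∧ Γ.degree v = k - 1 := by
  simp only [AvailRel, unsat, mem_filter, mem_univ, true_and, hs.minDegree_eq hreg]
  exact ⟨fun h => ⟨h.1, h.2.1, h.2.2.1⟩, fun h => ⟨h.1, h.2.1, h.2.2, hs.2 u v h.1 h.2.1 h.2.2⟩⟩

theorem avail_nonempty (hn : Even n) : (avail g Γ).Nonempty := by
  obtain ⟨w, hw⟩ := hs.exists_degree_eq_pred hreg
  have heven : Even #(deficient k Γ) :=
    Γ.even_card_degree_eq_pred (by simpa using hn) (hs.pos_of_not_isRegularOfDegree hreg) hs.1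
  have hpos : 0 < #(deficient k Γ) := card_pos.mpr ⟨w, mem_deficient.mpr hw⟩
  have htwo : 1 < #(deficient k Γ) := by rcases heven with ⟨c, hc⟩; omega
  obtain ⟨a, ha, b, hb, hab⟩ := one_lt_card.mp htwo
  rw [mem_deficient] at ha hb
  exact ⟨(a, b), mem_avail.mpr ((hs.availRel_iff hreg).mpr ⟨hab, ha, hb⟩)⟩

theorem addEdge (hg : 3 ≤ g) (hp : AvailRel g Γ u v) : Safe k g (HG.addEdge Γ u v) := by
  obtain ⟨huv, hu, hv⟩ := (hs.availRel_iff hreg).mp hp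
  have hk := hs.pos_of_not_isRegularOfDegree hreg
  have hadj := hp.not_adj hg
  refine ⟨fun x => ?_, fun x y hxy hx hy => ?_⟩
  · by_cases hxu : x = u
    · subst hxu
      right
      rw [degree_addEdge_left huv hadj]
      omega
    by_cases hxv : x = v
    · subst hxv
      right
      rw [degree_addEdge_right huv hadj]
      omega
    rw [degree_addEdge_of_ne hxu hxv]
    exact hs.1 x
  · rw [← mem_deficient, deficient_addEdge huv hadj hu hv] at hx hy
    simp only [mem_erase, mem_deficient] at hx hy
    obtain ⟨hxv, hxu, hx⟩ := hx
    refine le_trans ?_ (inf_edist_le_edist_addEdge Γ u v x y)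
    exact le_inf (hs.2 x y hxy hx hy.2.2) (le_inf (hs.2 x u hxu hx hu) (hs.2 x v hxv hx hv))

theorem card_deficient_addEdge_lt (hg : 3 ≤ g) (hp : AvailRel g Γ u v) :
    #(deficient k (HG.addEdge Γ u v)) < #(deficient k Γ) := by
  obtain ⟨huv, hu, hv⟩ := (hs.availRel_iff hreg).mp hp
  rw [deficient_addEdge huv (hp.not_adj hg) hu hv]
  exact (card_erase_lt_of_mem (by simpa [huv.symm] using hv)).trans
    (card_erase_lt_of_mem (mem_deficient.mpr hu))

end Safe

end HG

theorem safe_implies_saturation_general (k g : ℕ) (hg : 3 ≤ g)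
    (n : ℕ) (hn : Even n) (G : SimpleGraph (Fin n))
    (f : ℕ → SimpleGraph (Fin n)) (hf : HG.IsRun k g G f)
    (t : ℕ) (hsafe : HG.Safe k g (f t)) :
    ∃ s : ℕ, t ≤ s ∧ (f s).IsRegularOfDegree k := by
  induction hm : #(HG.deficient k (f t)) using Nat.strong_induction_on generalizing t with
  | _ m ih =>
  by_cases hreg : (f t).IsRegularOfDegree k
  · exact ⟨t, le_rfl, hreg⟩
  have hstep := hf.2 t
  rw [if_neg (not_or.mpr ⟨hreg, (hsafe.avail_nonempty hreg hn).ne_empty⟩)] at hstep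
  obtain ⟨p, hp, hnext⟩ := hstep
  rw [HG.mem_avail] at hp
  obtain ⟨s, hts, hs⟩ := ih _ (hm ▸ hnext ▸ hsafe.card_deficient_addEdge_lt hreg hg hp) (t + 1)
    (hnext ▸ hsafe.addEdge hreg hg hp) rfl
  exact ⟨s, by omega, hs⟩

/-- If at some time `t` the state `G_t` of a run of the
`(G,g,k)`-high-girth process is safe, then the run saturates: some later state is
`k`-regular. -/
theorem safe_implies_saturation (k g : ℕ) (hk : 3 ≤ k) (hg : 3 ≤ g)
    (n : ℕ) (hn : Even n) (G : SimpleGraph (Fin n)) (hdeg : ∀ v : Fin n, G.degree v ≤ k)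
    (f : ℕ → SimpleGraph (Fin n)) (hf : HG.IsRun k g G f)
    (t : ℕ) (hsafe : HG.Safe k g (f t)) :
    ∃ s : ℕ, t ≤ s ∧ (f s).IsRegularOfDegree k :=
  safe_implies_saturation_general k g hg n hn G f hf t hsafe
end
end

section
/- Let k ≥ 3 and g ≥ 3 be integers. Let Γ be a graph in which every vertex has degree k−1 or k and which is safe, i.e., every two vertices of degree k−1 are at graph distance at least g−1 in Γ. Let u ≠ v be two vertices of degree k−1 in Γ, and let Γ' be the graph obtained from Γ by adding the edge uv. Then every vertex of Γ' has degree k−1 or k, Γ' is safe, and if the girth of Γ is at least g then the girth of Γ' is also at least g. -/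
/-
Since `g ≥ 3`, the vertices `u` and `v` are not adjacent, so adding `uv` raises exactly the
degrees of `u` and `v`, from `k - 1` to `k`. A walk in `Γ ⊔ uv` from `x` either stays in `Γ` or
passes through `u` or `v`, so its length is at least `min (d x y) (min (d x u) (d x v))` with `d`
the distance in `Γ`; for two vertices of degree `k - 1` in `Γ ⊔ uv`, which are then vertices of
degree `k - 1` in `Γ` other than `u` and `v`, this is at least `g - 1`. A cycle through the new
edge is that edge followed by a `v`-`u` walk in `Γ`, so it has length at least `d u v + 1 ≥ g`;
every other cycle lies in `Γ`.
-/

open scoped Classical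

/-- A graph (all of whose degrees are `k-1` or `k`) is safe if every two of its
vertices of degree `k-1` are at graph distance at least `g-1`. -/
def SafeGraph {V : Type*} [Fintype V] (k g : ℕ) (Γ : SimpleGraph V) : Prop :=
  ∀ u v : V, u ≠ v → Γ.degree u = k - 1 → Γ.degree v = k - 1 →
    ((g - 1 : ℕ) : ℕ∞) ≤ Γ.edist u v

namespace SimpleGraph

variable {V : Type*} {G : SimpleGraph V} {u v w : V}

lemma neighborSet_sup_fromEdgeSet_of_ne (hwu : w ≠ u) (hwv : w ≠ v) :
    (G ⊔ fromEdgeSet {s(u, v)}).neighborSet w = G.neighborSet w := by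
  ext x
  simp [hwu, hwv]

lemma neighborSet_sup_fromEdgeSet_left (huv : u ≠ v) :
    (G ⊔ fromEdgeSet {s(u, v)}).neighborSet u = insert v (G.neighborSet u) := by
  ext x
  by_cases hx : x = v <;> simp [hx, huv]

lemma neighborSet_sup_fromEdgeSet_right (huv : u ≠ v) :
    (G ⊔ fromEdgeSet {s(u, v)}).neighborSet v = insert u (G.neighborSet v) := by
  rw [Sym2.eq_swap]
  exact neighborSet_sup_fromEdgeSet_left huv.symm

lemma degree_sup_fromEdgeSet [Fintype ((G ⊔ fromEdgeSet {s(u, v)}).neighborSet w)]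
    [Fintype (G.neighborSet w)] (huv : u ≠ v) (hadj : ¬G.Adj u v) :
    (G ⊔ fromEdgeSet {s(u, v)}).degree w =
      if w = u ∨ w = v then G.degree w + 1 else G.degree w := by
  simp only [← card_neighborSet_eq_degree, ← Nat.card_eq_fintype_card, Nat.card_coe_set_eq]
  split_ifs with hw
  · rcases hw with rfl | rfl
    · rw [neighborSet_sup_fromEdgeSet_left huv]
      exact Set.ncard_insert_of_notMem hadj
    · rw [neighborSet_sup_fromEdgeSet_right huv]
      exact Set.ncard_insert_of_notMem fun h => hadj h.symm
  · push Not at hw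
    rw [neighborSet_sup_fromEdgeSet_of_ne hw.1 hw.2]

lemma deleteEdges_sup_fromEdgeSet_le {s : Set (Sym2 V)} :
    (G ⊔ fromEdgeSet s).deleteEdges s ≤ G := by
  rw [deleteEdges, sup_sdiff_right_self]
  exact sdiff_le

lemma edist_deleteEdges_le_length {a b : V} {e : Sym2 V} (p : G.Walk a b) (he : e ∉ p.edges) :
    (G.deleteEdges {e}).edist a b ≤ p.length := by
  simpa using edist_le (p.toDeleteEdge e he)

theorem Walk.IsCycle.edist_deleteEdges_add_one_le_length {a : V} {c : G.Walk a a}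
    (hc : c.IsCycle) (he : s(u, v) ∈ c.edges) :
    (G.deleteEdges {s(u, v)}).edist u v + 1 ≤ c.length := by
  have huv : u ≠ v := (c.adj_of_mem_edges he).ne
  have hu : u ∈ c.support := c.fst_mem_support_of_mem_edges he
  have hv : v ∈ (c.rotate u hu).support :=
    (c.mem_support_rotate_iff u hu).2 (c.snd_mem_support_of_mem_edges he)
  set p := (c.rotate u hu).takeUntil v hv
  set q := (c.rotate u hu).dropUntil v hv
  have hlen : p.length + q.length = c.length := by
    rw [← Walk.length_append, Walk.take_spec, Walk.length_rotate]
  have hdisj := (hc.rotate hu).isTrail.disjoint_edges_takeUntil_dropUntil hv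
  have hp : 1 ≤ p.length := Nat.one_le_iff_ne_zero.2 fun h => huv (Walk.eq_of_length_eq_zero h)
  have hq : 1 ≤ q.length :=
    Nat.one_le_iff_ne_zero.2 fun h => huv (Walk.eq_of_length_eq_zero h).symm
  by_cases hep : s(u, v) ∈ p.edges
  · calc (G.deleteEdges {s(u, v)}).edist u v + 1 ≤ q.length + p.length := by
          rw [edist_comm]
          exact add_le_add (edist_deleteEdges_le_length q (hdisj hep)) (by exact_mod_cast hp)
      _ = c.length := by rw [← hlen]; push_cast; ring
  · calc (G.deleteEdges {s(u, v)}).edist u v + 1 ≤ p.length + q.length :=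
          add_le_add (edist_deleteEdges_le_length p hep) (by exact_mod_cast hq)
      _ = c.length := by rw [← hlen]; push_cast; ring

theorem min_egirth_le_egirth_sup_fromEdgeSet (G : SimpleGraph V) (u v : V) :
    min G.egirth (G.edist u v + 1) ≤ (G ⊔ fromEdgeSet {s(u, v)}).egirth := by
  rw [le_egirth]
  intro a c hc
  by_cases he : s(u, v) ∈ c.edges
  · calc min G.egirth (G.edist u v + 1) ≤ G.edist u v + 1 := min_le_right _ _
      _ ≤ ((G ⊔ fromEdgeSet {s(u, v)}).deleteEdges {s(u, v)}).edist u v + 1 :=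
        add_le_add_left (edist_anti deleteEdges_sup_fromEdgeSet_le) 1
      _ ≤ c.length := hc.edist_deleteEdges_add_one_le_length he
  · have hc' := (hc.toDeleteEdges _ {s(u, v)} fun e he' h => he (h ▸ he')).mapLe
      deleteEdges_sup_fromEdgeSet_le
    calc min G.egirth (G.edist u v + 1) ≤ G.egirth := min_le_left _ _
      _ ≤ c.length := by simpa using egirth_le_length hc'

lemma min_edist_le_length_of_walk_sup_fromEdgeSet {a b : V}
    (p : (G ⊔ fromEdgeSet {s(u, v)}).Walk a b) :
    min (G.edist a b) (min (G.edist a u) (G.edist a v)) ≤ p.length := by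
  induction p with
  | nil => simp
  | @cons a c b h p ih =>
    rw [Walk.length_cons, Nat.cast_add_one]
    rcases h with h | ⟨he, -⟩
    · have step (x : V) : G.edist a x ≤ G.edist c x + 1 := by
        calc G.edist a x ≤ G.edist a c + G.edist c x := G.edist_triangle
          _ = G.edist c x + 1 := by rw [edist_eq_one_iff_adj.2 h, add_comm]
      calc min (G.edist a b) (min (G.edist a u) (G.edist a v))
          ≤ min (G.edist c b + 1) (min (G.edist c u + 1) (G.edist c v + 1)) := by
            gcongr <;> apply step
        _ = min (G.edist c b) (min (G.edist c u) (G.edist c v)) + 1 := by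
            simp only [min_add_add_right]
        _ ≤ p.length + 1 := by gcongr
    · rcases Sym2.eq_iff.1 (Set.mem_singleton_iff.1 he) with ⟨rfl, -⟩ | ⟨rfl, -⟩ <;> simp

theorem min_edist_le_edist_sup_fromEdgeSet (a b : V) :
    min (G.edist a b) (min (G.edist a u) (G.edist a v)) ≤
      (G ⊔ fromEdgeSet {s(u, v)}).edist a b :=
  le_sInf (Set.forall_mem_range.2 min_edist_le_length_of_walk_sup_fromEdgeSet)

end SimpleGraph

open SimpleGraph

theorem SafeGraph.sup_fromEdgeSet {V : Type*} [Fintype V] {k g : ℕ} {G : SimpleGraph V}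
    {u v : V} (hsafe : SafeGraph k g G) (huv : u ≠ v) (hadj : ¬G.Adj u v)
    (hu : G.degree u = k - 1) (hv : G.degree v = k - 1) :
    SafeGraph k g (G ⊔ fromEdgeSet {s(u, v)}) := by
  have hdeg (x : V) (hx : (if x = u ∨ x = v then G.degree x + 1 else G.degree x) = k - 1) :
      x ≠ u ∧ x ≠ v ∧ G.degree x = k - 1 := by
    split_ifs at hx with hxuv
    · rcases hxuv with rfl | rfl <;> omega
    · push Not at hxuv
      exact ⟨hxuv.1, hxuv.2, hx⟩
  intro x y hxy hx hy
  -- applied to arguments, the lemma would carry synthesized `Fintype` instances, which differ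
  -- from those inside `SafeGraph`
  simp only [degree_sup_fromEdgeSet, huv, hadj, ne_eq, not_false_eq_true] at hx hy
  obtain ⟨hxu, hxv, hx⟩ := hdeg x hx
  obtain ⟨-, -, hy⟩ := hdeg y hy
  calc ((g - 1 : ℕ) : ℕ∞) ≤ min (G.edist x y) (min (G.edist x u) (G.edist x v)) :=
        le_min (hsafe x y hxy hx hy) (le_min (hsafe x u hxu hx hu) (hsafe x v hxv hx hv))
    _ ≤ _ := min_edist_le_edist_sup_fromEdgeSet x y

/-- Let `k ≥ 3`, `g ≥ 3`, and let `Γ` be a safe graph all of whose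
degrees are `k-1` or `k`. If `u ≠ v` both have degree `k-1` and `Γ'` is `Γ` plus the
edge `uv`, then all degrees of `Γ'` are `k-1` or `k`, `Γ'` is safe, and if `Γ` has
girth at least `g` then so does `Γ'`. -/
theorem safe_add_edge {V : Type*} [Fintype V] (k g : ℕ) (hk : 3 ≤ k) (hg : 3 ≤ g)
    (Γ : SimpleGraph V) (hdeg : ∀ v : V, Γ.degree v = k - 1 ∨ Γ.degree v = k)
    (hsafe : SafeGraph k g Γ) (u v : V) (huv : u ≠ v)
    (hu : Γ.degree u = k - 1) (hv : Γ.degree v = k - 1) :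
    (∀ w : V, (Γ ⊔ SimpleGraph.fromEdgeSet {s(u, v)}).degree w = k - 1 ∨
        (Γ ⊔ SimpleGraph.fromEdgeSet {s(u, v)}).degree w = k) ∧
    SafeGraph k g (Γ ⊔ SimpleGraph.fromEdgeSet {s(u, v)}) ∧
    ((g : ℕ∞) ≤ Γ.egirth → (g : ℕ∞) ≤ (Γ ⊔ SimpleGraph.fromEdgeSet {s(u, v)}).egirth) := by
  have hdist := hsafe u v huv hu hv
  have hnadj : ¬Γ.Adj u v := fun h => by
    rw [edist_eq_one_iff_adj.2 h] at hdist
    norm_cast at hdist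
    omega
  refine ⟨fun w => ?_, hsafe.sup_fromEdgeSet huv hnadj hu hv, fun hgirth => ?_⟩
  · simp only [degree_sup_fromEdgeSet huv hnadj]
    split_ifs with hw
    · rcases hw with rfl | rfl <;> omega
    · exact hdeg w
  · have hg' : (g : ℕ∞) ≤ Γ.edist u v + 1 := by
      calc (g : ℕ∞) = ((g - 1 : ℕ) : ℕ∞) + 1 := by norm_cast; omega
        _ ≤ Γ.edist u v + 1 := by gcongr
    exact (le_min hgirth hg').trans (min_egirth_le_egirth_sup_fromEdgeSet Γ u v)
end

section
/- Let k ≥ 3 be an integer and 1/3 ≤ c < 1; set ε = c(1−c)/3, β = ε/10, α = β/100, T = (n − n^{c+ε})/2 and T_safe = (n − n^ε)/2. Let g be a natural number with 3 ≤ g ≤ c·log_{k−1}(n), let t be an integer with T ≤ t ≤ T_safe, let Γ be a graph on n vertices with every degree equal to k−1 or k and with exactly n−2t vertices of degree k−1 forming the set W, and let H be a graph on W all of whose edges are pairs at graph distance at least g−1 in Γ. Suppose Γ and H satisfy (P4): for every v ∈ W there are at most log n vertices u ∈ W with uv ∈ E(H) such that u, v are ℓ-threatened for some ℓ ≤ g−2.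 Set t' = ⌈(n − (n−2t)·n^{−α})/2⌉. Then in every run of the H-restricted process, for every 0 ≤ s ≤ t' − t and every vertex v of degree k−1 in G'_s, the number of edges uv ∈ E(H) with u and v both of degree k−1 in G'_s and dist_{G'_s}(u, v) ≥ g−1 is at least |Γ_H(v) ∩ U_s| − log n, where U_s is the set of degree-(k−1) vertices of G'_s and Γ_H(v) is the neighborhood of v in H. -/
/-!
The process only ever adds edges of `H`, so every `G'_s` lies between `Γ` and `Γ ⊔ H`; in
particular its vertices of degree `k - 1` lie in `W`. If an `H`-neighbour `u` of `v` is at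
distance less than `g - 1` in `G'_s`, a shortest `u`–`v` path in `Γ ⊔ H` consists of
`Γ`-stretches joined by `H`-edges, and replacing each stretch by the `Γ`-distance of its ends
shows that `u, v` are `ℓ`-threatened for some `ℓ ≤ g - 2`. By (P4) there are at most `log n`
such `u`.
-/

open scoped Classical ENNReal NNReal

noncomputable section

namespace HG

variable {n : ℕ}

/-- The set `W` of vertices of degree `k - 1`. -/
def Wdeg (k : ℕ) (Γ : SimpleGraph (Fin n)) : Finset (Fin n) :=
  Finset.univ.filter fun v => Γ.degree v = k - 1

/-- The number of vertices of `W` at distance exactly `ℓ` from `v` in `Γ`. -/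
def vCountW (Γ : SimpleGraph (Fin n)) (W : Finset (Fin n)) (v : Fin n) (ℓ : ℕ) : ℕ :=
  (W.filter fun u => Γ.edist v u = (ℓ : ℕ∞)).card

/-- The number of unordered pairs of vertices of `W` at distance exactly `ℓ` in `Γ`. -/
def pCountW (Γ : SimpleGraph (Fin n)) (W : Finset (Fin n)) (ℓ : ℕ) : ℕ :=
  (Finset.univ.filter fun e : Sym2 (Fin n) =>
    ∃ u v : Fin n, e = s(u, v) ∧ u ∈ W ∧ v ∈ W ∧ Γ.edist u v = (ℓ : ℕ∞)).card

/-- `L(ℓ, t) = max {1, (k-1)^ℓ·(n - 2t)/n^(c+ε)}`. -/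
def Lfun (k : ℕ) (c ε : ℝ) (n ℓ t : ℕ) : ℝ :=
  max 1 ((k - 1 : ℝ) ^ ℓ * ((n : ℝ) - 2 * t) / (n : ℝ) ^ (c + ε))

/-- `Γ` is `C`-path-bounded at time `t` (with designated vertex set `W`). -/
def PathBoundedW (k g : ℕ) (c ε : ℝ) (t : ℕ) (C : ℝ) (Γ : SimpleGraph (Fin n))
    (W : Finset (Fin n)) : Prop :=
  (∀ v ∈ W, ∀ ℓ : ℕ, 1 ≤ ℓ → ℓ ≤ g - 2 →
    (vCountW Γ W v ℓ : ℝ) ≤ Lfun k c ε n ℓ t * Real.log n ^ C) ∧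
  ∀ ℓ : ℕ, 1 ≤ ℓ → ℓ ≤ g - 2 →
    (pCountW Γ W ℓ : ℝ) ≤ (W.card : ℝ) ^ 2 * (k - 1 : ℝ) ^ ℓ * Real.log n ^ C / n

/-- The graph `H_Γ` on `W`: its edges are the pairs of vertices of `W` at distance at
least `g - 1` in `Γ`. -/
def HGamma (k g : ℕ) (Γ : SimpleGraph (Fin n)) : SimpleGraph (Fin n) :=
  SimpleGraph.fromRel fun u v =>
    u ∈ Wdeg k Γ ∧ v ∈ Wdeg k Γ ∧ ((g - 1 : ℕ) : ℕ∞) ≤ Γ.edist u v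

/-- Bernoulli measure on `Bool` (degenerate if `p > 1`, which never occurs below). -/
def bern (p : ℝ≥0∞) : PMF Bool := if h : p ≤ 1 then PMF.ofFintype (fun b => cond b p (1 - p)) (by simp [h]) else PMF.pure true

/-- The law of independent Bernoulli(`p`) indicators, one for each potential edge. -/
def edgeMeasure (n : ℕ) (p : ℝ≥0∞) : MeasureTheory.Measure (Sym2 (Fin n) → Bool) :=
  MeasureTheory.Measure.pi fun _ => (bern p).toMeasure

/-- The binomial random subgraph of `H_Γ` determined by `ω`: each edge `e` of `H_Γ` is
retained iff `ω e = true`. -/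
def randSub (k g : ℕ) (Γ : SimpleGraph (Fin n)) (ω : Sym2 (Fin n) → Bool) :
    SimpleGraph (Fin n) :=
  SimpleGraph.fromEdgeSet {e | e ∈ (HGamma k g Γ).edgeSet ∧ ω e = true}

/-- `u, v ∈ W` are `ℓ`-threatened (with respect to `Γ` and `H`). -/
def Threatened (Γ H : SimpleGraph (Fin n)) (W : Finset (Fin n)) (ℓ : ℕ) (u v : Fin n) :
    Prop :=
  ∃ (m : ℕ) (w : ℕ → Fin n), 1 ≤ m ∧ w 0 = u ∧ w (2 * m - 1) = v ∧
    (∀ i < 2 * m, w i ∈ W) ∧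
    (∀ i : ℕ, 1 ≤ i → i ≤ m - 1 → H.Adj (w (2 * i - 1)) (w (2 * i))) ∧
    ((m : ℕ∞) - 1 + ∑ i ∈ Finset.range m, Γ.edist (w (2 * i)) (w (2 * i + 1))) = (ℓ : ℕ∞)

/-- `T_ℓ`: the number of `ℓ`-threatened unordered pairs. -/
def threatPairs (Γ H : SimpleGraph (Fin n)) (W : Finset (Fin n)) (ℓ : ℕ) : ℕ :=
  (Finset.univ.filter fun e : Sym2 (Fin n) =>
    ∃ u v : Fin n, u ≠ v ∧ e = s(u, v) ∧ Threatened Γ H W ℓ u v).card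

/-- `T_ℓ(v)`: the number of `ℓ`-threatened pairs containing `v`. -/
def threatAt (Γ H : SimpleGraph (Fin n)) (W : Finset (Fin n)) (ℓ : ℕ) (v : Fin n) : ℕ :=
  (Finset.univ.filter fun u : Fin n => u ≠ v ∧ Threatened Γ H W ℓ u v).card

/-- `e(H[S])`: the number of edges of `H` with both endpoints in `S`. -/
def eIn (H : SimpleGraph (Fin n)) (S : Finset (Fin n)) : ℕ :=
  (Finset.univ.filter fun e : Sym2 (Fin n) => e ∈ H.edgeSet ∧ ∀ v ∈ e, v ∈ S).card

/-- Conclusions (P1)–(P5), with parameter `Q`, for the pair `(Γ, H)`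
(here `β = ε/10` and `W = Wdeg k Γ`). -/
def Props (k g : ℕ) (c ε : ℝ) (t : ℕ) (Q : ℝ) (Γ H : SimpleGraph (Fin n)) : Prop :=
  (∀ v ∈ Wdeg k Γ,
    |(H.degree v : ℝ) - (n : ℝ) ^ (ε / 10)| ≤
      (n : ℝ) ^ (-(0.4 * (ε / 10))) * (n : ℝ) ^ (ε / 10)) ∧
  (∀ ℓ : ℕ, ℓ ≤ g - 2 →
    (threatPairs Γ H (Wdeg k Γ) ℓ : ℝ) ≤
      ((Wdeg k Γ).card : ℝ) ^ 2 * (k - 1 : ℝ) ^ ℓ * Real.log n ^ Q / n) ∧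
  (∀ v ∈ Wdeg k Γ, ∀ ℓ : ℕ, ℓ ≤ g - 2 →
    (threatAt Γ H (Wdeg k Γ) ℓ v : ℝ) ≤ Lfun k c ε n ℓ t * Real.log n ^ Q) ∧
  (∀ v ∈ Wdeg k Γ,
    (((Wdeg k Γ).filter fun u =>
        H.Adj u v ∧ ∃ ℓ : ℕ, ℓ ≤ g - 2 ∧ Threatened Γ H (Wdeg k Γ) ℓ u v).card : ℝ) ≤
      Real.log n) ∧
  (∀ S ⊆ Wdeg k Γ, (S.card : ℝ) ≤ ((Wdeg k Γ).card : ℝ) / (n : ℝ) ^ (ε / 2) →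
    (eIn H S : ℝ) ≤ (S.card : ℝ) * (n : ℝ) ^ (0.9 * (ε / 10)))

end HG

namespace HG

variable {n : ℕ}

/-- Ordered pairs `(u, v)` forming an edge of `H` with both endpoints of degree `k-1`
in the current graph `Γ` and at distance at least `g-1` in `Γ`. -/
def ravail (k g : ℕ) (H Γ : SimpleGraph (Fin n)) : Finset (Fin n × Fin n) :=
  Finset.univ.filter fun p =>
    H.Adj p.1 p.2 ∧ Γ.degree p.1 = k - 1 ∧ Γ.degree p.2 = k - 1 ∧
      ((g - 1 : ℕ) : ℕ∞) ≤ Γ.edist p.1 p.2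

/-- One step of the `H`-restricted process.  (The uniform choice is made over ordered
pairs, which induces the uniform distribution over the eligible edges of `H`.) -/
def rstep (k g : ℕ) (H Γ : SimpleGraph (Fin n)) : PMF (SimpleGraph (Fin n)) :=
  if h : ravail k g H Γ = ∅ then PMF.pure Γ
  else (PMF.uniformOfFinset (ravail k g H Γ) (Finset.nonempty_iff_ne_empty.2 h)).map
    fun p => addEdge Γ p.1 p.2

/-- The distribution of the trajectory `(G'_0, …, G'_T)` of the `H`-restricted process
started at `Γ`, recorded as a function `ℕ → SimpleGraph (Fin n)`. -/
def rtraj (k g : ℕ) (H Γ : SimpleGraph (Fin n)) : ℕ → PMF (ℕ → SimpleGraph (Fin n))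
  | 0 => PMF.pure fun _ => Γ
  | T + 1 => (rtraj k g H Γ T).bind fun f =>
      (rstep k g H (f T)).map fun Δ => Function.update f (T + 1) Δ

/-- `f` is a run of the `H`-restricted process started at `Γ`. -/
def IsRRun (k g : ℕ) (H Γ : SimpleGraph (Fin n)) (f : ℕ → SimpleGraph (Fin n)) : Prop :=
  f 0 = Γ ∧ ∀ s : ℕ,
    if ravail k g H (f s) = ∅ then f (s + 1) = f s
    else ∃ p ∈ ravail k g H (f s), f (s + 1) = addEdge (f s) p.1 p.2

end HG

namespace HG

variable {n : ℕ}

section Chains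

variable (Γ H : SimpleGraph (Fin n)) (W : Finset (Fin n))

/-- A chain from `x` to `v` as in the definition of `Threatened`, except that the starting
vertex `x` need not lie in `W`. -/
def IsChain (m : ℕ) (w : ℕ → Fin n) (x v : Fin n) : Prop :=
  1 ≤ m ∧ w 0 = x ∧ w (2 * m - 1) = v ∧ (∀ i, 1 ≤ i → i < 2 * m → w i ∈ W) ∧
    ∀ i : ℕ, 1 ≤ i → i ≤ m - 1 → H.Adj (w (2 * i - 1)) (w (2 * i))

def chainLength (m : ℕ) (w : ℕ → Fin n) : ℕ∞ :=
  (m : ℕ∞) - 1 + ∑ i ∈ Finset.range m, Γ.edist (w (2 * i)) (w (2 * i + 1))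

variable {Γ H W}

lemma isChain_const {v : Fin n} (hv : v ∈ W) : IsChain H W 1 (fun _ => v) v v :=
  ⟨le_rfl, rfl, rfl, fun _ _ _ => hv, fun i h1 h2 => by omega⟩

lemma chainLength_const (v : Fin n) : chainLength Γ 1 (fun _ => v) = 0 := by
  simp [chainLength]

lemma IsChain.update_zero {m : ℕ} {w : ℕ → Fin n} {y v : Fin n} (hc : IsChain H W m w y v)
    (x : Fin n) : IsChain H W m (Function.update w 0 x) x v := by
  obtain ⟨hm, -, hv, hW, hH⟩ := hc
  refine ⟨hm, by simp, ?_, fun i h1 h2 => ?_, fun i h1 h2 => ?_⟩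
  · rwa [Function.update_of_ne (by omega)]
  · rw [Function.update_of_ne (by omega)]; exact hW i h1 h2
  · rw [Function.update_of_ne (by omega), Function.update_of_ne (by omega)]; exact hH i h1 h2

lemma chainLength_update_zero_le {m : ℕ} {w : ℕ → Fin n} (hm : 1 ≤ m) (x : Fin n) :
    chainLength Γ m (Function.update w 0 x) ≤ Γ.edist x (w 0) + chainLength Γ m w := by
  have h0 : 0 ∈ Finset.range m := Finset.mem_range.2 hm
  have hrest : ∀ i ∈ (Finset.range m).erase 0,
      Γ.edist (Function.update w 0 x (2 * i)) (Function.update w 0 x (2 * i + 1)) =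
        Γ.edist (w (2 * i)) (w (2 * i + 1)) := fun i hi => by
    rw [Function.update_of_ne (by grind), Function.update_of_ne (by omega)]
  simp only [chainLength, ← Finset.add_sum_erase _ _ h0, Finset.sum_congr rfl hrest]
  have : Γ.edist x (w 1) ≤ Γ.edist x (w 0) + Γ.edist (w 0) (w 1) := SimpleGraph.edist_triangle
  simp only [mul_zero, zero_add, Function.update_self, Function.update_of_ne one_ne_zero]
  calc _ ≤ (m : ℕ∞) - 1 + (Γ.edist x (w 0) + Γ.edist (w 0) (w 1) +
          ∑ i ∈ (Finset.range m).erase 0, Γ.edist (w (2 * i)) (w (2 * i + 1))) := by gcongr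
    _ = _ := by ring

/-- Prepend the trivial segment `x` and the `H`-edge `x y` to a chain starting at `y`. -/
def consEdge (x : Fin n) (w : ℕ → Fin n) (i : ℕ) : Fin n :=
  if i ≤ 1 then x else w (i - 2)

lemma IsChain.consEdge {m : ℕ} {w : ℕ → Fin n} {x y v : Fin n} (hc : IsChain H W m w y v)
    (hxy : H.Adj x y) (hx : x ∈ W) (hy : y ∈ W) :
    IsChain H W (m + 1) (consEdge x w) x v := by
  obtain ⟨hm, hy0, hv, hW, hH⟩ := hc
  refine ⟨by omega, by simp [HG.consEdge], ?_, fun i h1 h2 => ?_, fun i h1 h2 => ?_⟩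
  · simpa [HG.consEdge, show ¬ 2 * (m + 1) - 1 ≤ 1 by omega,
      show 2 * (m + 1) - 1 - 2 = 2 * m - 1 by omega] using hv
  · unfold HG.consEdge
    split_ifs with hi
    · exact hx
    · rcases Nat.eq_or_lt_of_le (show 2 ≤ i by omega) with rfl | hi2
      · simpa [hy0] using hy
      · exact hW _ (by omega) (by omega)
  · unfold HG.consEdge
    rw [if_neg (by omega : ¬ 2 * i ≤ 1)]
    rcases Nat.eq_or_lt_of_le h1 with rfl | hi
    · simpa [hy0] using hxy
    · rw [if_neg (by omega), show 2 * i - 1 - 2 = 2 * (i - 1) - 1 by omega,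
        show 2 * i - 2 = 2 * (i - 1) by omega]
      exact hH (i - 1) (by omega) (by omega)

lemma chainLength_consEdge {m : ℕ} (hm : 1 ≤ m) (x : Fin n) (w : ℕ → Fin n) :
    chainLength Γ (m + 1) (consEdge x w) = chainLength Γ m w + 1 := by
  have hseg : ∀ i ∈ Finset.range m,
      Γ.edist (consEdge x w (2 * (i + 1))) (consEdge x w (2 * (i + 1) + 1)) =
        Γ.edist (w (2 * i)) (w (2 * i + 1)) := fun i _ => by
    simp only [HG.consEdge, if_neg (by omega : ¬ 2 * (i + 1) ≤ 1),
      if_neg (by omega : ¬ 2 * (i + 1) + 1 ≤ 1)]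
    rw [show 2 * (i + 1) - 2 = 2 * i by omega, show 2 * (i + 1) + 1 - 2 = 2 * i + 1 by omega]
  have hm1 : ((m : ℕ∞) - 1) + 1 = m := tsub_add_cancel_of_le (by exact_mod_cast hm)
  rw [chainLength, chainLength, Finset.sum_range_succ', Finset.sum_congr rfl hseg]
  simp only [HG.consEdge, mul_zero, zero_le, if_true, zero_add, le_refl,
    SimpleGraph.edist_self, add_zero]
  rw [show ((m + 1 : ℕ) : ℕ∞) - 1 = m by norm_cast, add_right_comm, hm1]

lemma exists_chain_of_walk (hHW : ∀ a b, H.Adj a b → a ∈ W ∧ b ∈ W) {x v : Fin n}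
    (p : (Γ ⊔ H).Walk x v) (hv : v ∈ W) :
    ∃ m w, IsChain H W m w x v ∧ chainLength Γ m w ≤ p.length := by
  induction p with
  | nil => exact ⟨1, _, isChain_const hv, by simp [chainLength_const]⟩
  | @cons x y v hxy q ih =>
    obtain ⟨m, w, hc, hlen⟩ := ih hv
    rw [SimpleGraph.Walk.length_cons, Nat.cast_succ]
    rcases hxy with hΓ | hH
    · refine ⟨m, _, hc.update_zero x, (chainLength_update_zero_le hc.1 x).trans ?_⟩
      rw [hc.2.1, (SimpleGraph.edist_eq_one_iff_adj).2 hΓ, add_comm]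
      gcongr
    · refine ⟨m + 1, _, hc.consEdge hH (hHW x y hH).1 (hHW x y hH).2, ?_⟩
      rw [chainLength_consEdge hc.1]
      gcongr

lemma threatened_of_walk (hHW : ∀ a b, H.Adj a b → a ∈ W ∧ b ∈ W) {u v : Fin n}
    (p : (Γ ⊔ H).Walk u v) (hu : u ∈ W) (hv : v ∈ W) :
    ∃ ℓ ≤ p.length, Threatened Γ H W ℓ u v := by
  obtain ⟨m, w, ⟨hm, hw0, hwv, hwW, hwH⟩, hlen⟩ := exists_chain_of_walk hHW p hv
  have hfin : chainLength Γ m w ≠ ⊤ := ne_top_of_le_ne_top (ENat.natCast_ne_top _) hlen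
  refine ⟨(chainLength Γ m w).toNat, ?_, m, w, hm, hw0, hwv, fun i hi => ?_, hwH,
    (ENat.natCast_toNat hfin).symm⟩
  · exact_mod_cast (ENat.natCast_toNat hfin).symm ▸ hlen
  · rcases Nat.eq_zero_or_pos i with rfl | hpos
    · exact hw0 ▸ hu
    · exact hwW i hpos hi

end Chains

section RestrictedRun

variable {k g : ℕ} {Γ H : SimpleGraph (Fin n)}

lemma addEdge_le_sup {G : SimpleGraph (Fin n)} {u v : Fin n} (hG : G ≤ Γ ⊔ H)
    (huv : H.Adj u v) : addEdge G u v ≤ Γ ⊔ H :=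
  sup_le hG (((SimpleGraph.edge_le_iff H).2 (Or.inr huv)).trans le_sup_right)

lemma IsRRun.succ_eq_or {f : ℕ → SimpleGraph (Fin n)} (hf : IsRRun k g H Γ f) (s : ℕ) :
    f (s + 1) = f s ∨ ∃ u v, H.Adj u v ∧ f (s + 1) = addEdge (f s) u v := by
  have hstep := hf.2 s
  split_ifs at hstep
  · exact Or.inl hstep
  · obtain ⟨p, hp, hfp⟩ := hstep
    exact Or.inr ⟨p.1, p.2, (Finset.mem_filter.1 hp).2.1, hfp⟩

lemma IsRRun.le_apply {f : ℕ → SimpleGraph (Fin n)} (hf : IsRRun k g H Γ f) (s : ℕ) :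
    Γ ≤ f s := by
  induction s with
  | zero => exact hf.1.ge
  | succ s ih =>
    rcases hf.succ_eq_or s with h | ⟨u, v, -, h⟩
    · exact h ▸ ih
    · exact h ▸ ih.trans le_sup_left

lemma IsRRun.apply_le_sup {f : ℕ → SimpleGraph (Fin n)} (hf : IsRRun k g H Γ f) (s : ℕ) :
    f s ≤ Γ ⊔ H := by
  induction s with
  | zero => exact hf.1 ▸ le_sup_left
  | succ s ih =>
    rcases hf.succ_eq_or s with h | ⟨u, v, huv, h⟩
    · exact h ▸ ih
    · exact h ▸ addEdge_le_sup ih huv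

end RestrictedRun

lemma mem_Wdeg_of_le {k : ℕ} {Γ G : SimpleGraph (Fin n)}
    (hdeg : ∀ v, Γ.degree v = k - 1 ∨ Γ.degree v = k) (hle : Γ ≤ G) {u : Fin n}
    (hu : G.degree u = k - 1) : u ∈ Wdeg k Γ := by
  have := SimpleGraph.degree_le_of_le (v := u) hle
  have := hdeg u
  simp only [Wdeg, Finset.mem_filter, Finset.mem_univ, true_and]
  omega

lemma threatened_of_edist_lt {g : ℕ} {Γ H G : SimpleGraph (Fin n)} {W : Finset (Fin n)}
    (hHW : ∀ a b, H.Adj a b → a ∈ W ∧ b ∈ W) (hG : G ≤ Γ ⊔ H) {u v : Fin n} (hu : u ∈ W)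
    (hv : v ∈ W) (hlt : G.edist u v < (g - 1 : ℕ)) :
    ∃ ℓ ≤ g - 2, Threatened Γ H W ℓ u v := by
  obtain ⟨p, hp⟩ := SimpleGraph.exists_walk_of_edist_ne_top hlt.ne_top
  obtain ⟨ℓ, hℓ, hthr⟩ := threatened_of_walk hHW (p.mapLe hG) hu hv
  rw [← hp, Nat.cast_lt] at hlt
  exact ⟨ℓ, by rw [SimpleGraph.Walk.length_mapLe] at hℓ; omega, hthr⟩

end HG

theorem most_neighbors_available_general (k : ℕ) (n : ℕ) (g : ℕ) (t : ℕ) (t' : ℕ)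
    (Γ : SimpleGraph (Fin n)) (hdeg : ∀ v : Fin n, Γ.degree v = k - 1 ∨ Γ.degree v = k)
    (H : SimpleGraph (Fin n))
    (hH : ∀ u v : Fin n, H.Adj u v →
      u ∈ HG.Wdeg k Γ ∧ v ∈ HG.Wdeg k Γ ∧ ((g - 1 : ℕ) : ℕ∞) ≤ Γ.edist u v)
    (hP4 : ∀ v ∈ HG.Wdeg k Γ,
      (((HG.Wdeg k Γ).filter fun u =>
          H.Adj u v ∧ ∃ ℓ : ℕ, ℓ ≤ g - 2 ∧
            HG.Threatened Γ H (HG.Wdeg k Γ) ℓ u v).card : ℝ) ≤ Real.log n)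
    (f : ℕ → SimpleGraph (Fin n)) (hf : HG.IsRRun k g H Γ f) :
    ∀ s : ℕ, s ≤ t' - t → ∀ v : Fin n, (f s).degree v = k - 1 →
      ((Finset.univ.filter fun u : Fin n =>
          H.Adj v u ∧ (f s).degree u = k - 1 ∧
            ((g - 1 : ℕ) : ℕ∞) ≤ (f s).edist v u).card : ℝ) ≥
        ((Finset.univ.filter fun u : Fin n =>
            H.Adj v u ∧ (f s).degree u = k - 1).card : ℝ) - Real.log n := by
  intro s _ v hv
  have hHW a b (h : H.Adj a b) : a ∈ HG.Wdeg k Γ ∧ b ∈ HG.Wdeg k Γ :=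
    ⟨(hH a b h).1, (hH a b h).2.1⟩
  have hW : ∀ {u}, (f s).degree u = k - 1 → u ∈ HG.Wdeg k Γ :=
    HG.mem_Wdeg_of_le hdeg (hf.le_apply s)
  set U := Finset.univ.filter fun u : Fin n => H.Adj v u ∧ (f s).degree u = k - 1
  have hnear : U.filter (fun u => ¬ ((g - 1 : ℕ) : ℕ∞) ≤ (f s).edist v u) ⊆
      (HG.Wdeg k Γ).filter fun u =>
        H.Adj u v ∧ ∃ ℓ : ℕ, ℓ ≤ g - 2 ∧ HG.Threatened Γ H (HG.Wdeg k Γ) ℓ u v := by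
    intro u hu
    simp only [U, Finset.mem_filter, Finset.mem_univ, true_and, not_le] at hu ⊢
    obtain ⟨⟨hvu, hu⟩, hlt⟩ := hu
    rw [SimpleGraph.edist_comm] at hlt
    exact ⟨hW hu, hvu.symm, HG.threatened_of_edist_lt hHW (hf.apply_le_sup s) (hW hu) (hW hv) hlt⟩
  rw [← U.card_filter_add_card_filter_not fun u => ((g - 1 : ℕ) : ℕ∞) ≤ (f s).edist v u,
    Nat.cast_add]
  have := ((Nat.cast_le (α := ℝ)).2 (Finset.card_le_card hnear)).trans (hP4 v (hW hv))
  simp only [U, Finset.filter_filter, and_assoc] at this ⊢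
  linarith

/-- Under hypothesis (P4), in every run of the `H`-restricted
process, for every `0 ≤ s ≤ t' - t` and every vertex `v` of degree `k-1` in `G'_s`,
the number of edges `uv ∈ E(H)` with both ends of degree `k-1` in `G'_s` and
`dist_{G'_s}(u,v) ≥ g-1` is at least `|Γ_H(v) ∩ U_s| - log n`. -/
theorem most_neighbors_available (k : ℕ) (hk : 3 ≤ k) (c : ℝ)
    (hc0 : 1 / 3 ≤ c) (hc1 : c < 1) (n : ℕ) (hn : Even n)
    (g : ℕ) (hg3 : 3 ≤ g) (hgle : (g : ℝ) ≤ c * Real.log n / Real.log (k - 1))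
    (t : ℕ)
    (htlo : ((n : ℝ) - (n : ℝ) ^ (c + c * (1 - c) / 3)) / 2 ≤ (t : ℝ))
    (hthi : (t : ℝ) ≤ ((n : ℝ) - (n : ℝ) ^ (c * (1 - c) / 3)) / 2)
    (t' : ℕ)
    (ht' : t' = ⌈((n : ℝ) -
      ((n : ℝ) - 2 * t) * (n : ℝ) ^ (-(c * (1 - c) / 3 / 10 / 100))) / 2⌉₊)
    (Γ : SimpleGraph (Fin n))
    (hdeg : ∀ v : Fin n, Γ.degree v = k - 1 ∨ Γ.degree v = k)
    (hW : (HG.Wdeg k Γ).card = n - 2 * t)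
    (H : SimpleGraph (Fin n))
    (hH : ∀ u v : Fin n, H.Adj u v →
      u ∈ HG.Wdeg k Γ ∧ v ∈ HG.Wdeg k Γ ∧ ((g - 1 : ℕ) : ℕ∞) ≤ Γ.edist u v)
    (hP4 : ∀ v ∈ HG.Wdeg k Γ,
      (((HG.Wdeg k Γ).filter fun u =>
          H.Adj u v ∧ ∃ ℓ : ℕ, ℓ ≤ g - 2 ∧
            HG.Threatened Γ H (HG.Wdeg k Γ) ℓ u v).card : ℝ) ≤ Real.log n)
    (f : ℕ → SimpleGraph (Fin n)) (hf : HG.IsRRun k g H Γ f) :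
    ∀ s : ℕ, s ≤ t' - t → ∀ v : Fin n, (f s).degree v = k - 1 →
      ((Finset.univ.filter fun u : Fin n =>
          H.Adj v u ∧ (f s).degree u = k - 1 ∧
            ((g - 1 : ℕ) : ℕ∞) ≤ (f s).edist v u).card : ℝ) ≥
        ((Finset.univ.filter fun u : Fin n =>
            H.Adj v u ∧ (f s).degree u = k - 1).card : ℝ) - Real.log n :=
  most_neighbors_available_general k n g t t' Γ hdeg H hH hP4 f hf
end
end
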